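/- arXiv:2106.00417 — 2 statements merged into one kernel-verified Lean document; each statement's English description precedes it below -/
import Mathlib

section
/- Let Z be a measurable space, let μ_s and μ_t be probability measures on Z × Bool (the source and target joint distributions over labeled examples), with feature-marginals P_s := μ_s.map Prod.fst and P_t := μ_t.map Prod.fst. Let H be a nonempty set of measurable hypotheses h : Z → Bool, and set λ := inf_{h ∈ H} (R_{μ_t}(h) + R_{μ_s}(h)). Then for every h ∈ H, R_{μ_t}(h) ≤ R_{μ_s}(h) + (1/2) · d_{HΔH}(P_s, P_t) + λ. -/
open MeasureTheory

lemma bool_ne_measurable {Z : Type*} [MeasurableSpace Z] {f g : Z → Bool}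
    (hf : Measurable f) (hg : Measurable g) : MeasurableSet {z | f z ≠ g z} := by
  have : {z | f z ≠ g z} =
      (f ⁻¹' {true} ∩ g ⁻¹' {false}) ∪ (f ⁻¹' {false} ∩ g ⁻¹' {true}) := by
    ext z; cases hfz : f z <;> cases hgz : g z <;> simp [hfz, hgz]
  rw [this]
  exact ((hf (measurableSet_singleton _)).inter (hg (measurableSet_singleton _))).union
    ((hf (measurableSet_singleton _)).inter (hg (measurableSet_singleton _)))

/-- Ben-David et al. adaptation bound: for every hypothesis `h` in the class `H`,
the target risk is bounded by the source risk plus half the HΔH-divergence of the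
feature marginals plus the joint optimal error `lam`. -/
theorem adaptation_bound {Z : Type*} [MeasurableSpace Z]
    (μs μt : Measure (Z × Bool)) [IsProbabilityMeasure μs] [IsProbabilityMeasure μt]
    (H : Set (Z → Bool)) (hne : H.Nonempty) (hmeas : ∀ h ∈ H, Measurable h)
    (Ps Pt : Measure Z) (hPs : Ps = μs.map Prod.fst) (hPt : Pt = μt.map Prod.fst)
    (R : Measure (Z × Bool) → (Z → Bool) → ℝ)
    (hR : ∀ μ h, R μ h = (μ {p : Z × Bool | h p.1 ≠ p.2}).toReal)
    (dHH : ℝ)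
    (hd : dHH = 2 * ⨆ p : H × H,
      |(Ps {z | p.1.1 z ≠ p.2.1 z}).toReal - (Pt {z | p.1.1 z ≠ p.2.1 z}).toReal|)
    (lam : ℝ) (hlam : lam = ⨅ h : H, (R μt h + R μs h)) :
    ∀ h ∈ H, R μt h ≤ R μs h + (1 / 2) * dHH + lam := by
  subst hPs hPt
  haveI : IsProbabilityMeasure (μs.map Prod.fst) :=
    Measure.isProbabilityMeasure_map measurable_fst.aemeasurable
  haveI : IsProbabilityMeasure (μt.map Prod.fst) :=
    Measure.isProbabilityMeasure_map measurable_fst.aemeasurable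
  intro h hh
  -- map applications
  have hmap : ∀ (μ : Measure (Z × Bool)), ∀ f g : Z → Bool, Measurable f → Measurable g →
      (μ.map Prod.fst) {z | f z ≠ g z} = μ {p : Z × Bool | f p.1 ≠ g p.1} := by
    intro μ f g hf hg
    rw [Measure.map_apply measurable_fst (bool_ne_measurable hf hg)]
    rfl
  -- bounded above
  have hSbdd : BddAbove (Set.range fun p : H × H =>
      |((μs.map Prod.fst) {z | p.1.1 z ≠ p.2.1 z}).toReal -
        ((μt.map Prod.fst) {z | p.1.1 z ≠ p.2.1 z}).toReal|) := by
    refine ⟨1, ?_⟩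
    rintro x ⟨p, rfl⟩
    have h1 : ((μs.map Prod.fst) {z | p.1.1 z ≠ p.2.1 z}).toReal ≤ 1 := by
      have := prob_le_one (μ := μs.map Prod.fst) (s := {z | p.1.1 z ≠ p.2.1 z})
      simpa using ENNReal.toReal_mono (by simp) this
    have h2 : ((μt.map Prod.fst) {z | p.1.1 z ≠ p.2.1 z}).toReal ≤ 1 := by
      have := prob_le_one (μ := μt.map Prod.fst) (s := {z | p.1.1 z ≠ p.2.1 z})
      simpa using ENNReal.toReal_mono (by simp) this
    have h3 : (0:ℝ) ≤ ((μs.map Prod.fst) {z | p.1.1 z ≠ p.2.1 z}).toReal := ENNReal.toReal_nonneg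
    have h4 : (0:ℝ) ≤ ((μt.map Prod.fst) {z | p.1.1 z ≠ p.2.1 z}).toReal := ENNReal.toReal_nonneg
    rw [abs_sub_le_iff]; constructor <;> linarith
  -- key inequality for each h'
  have key : ∀ h' ∈ H, R μt h ≤ R μs h + (1/2) * dHH + (R μt h' + R μs h') := by
    intro h' hh'
    have mh := hmeas h hh
    have mh' := hmeas h' hh'
    -- (A)
    have A : R μt h ≤ R μt h' + (μt {p : Z × Bool | h p.1 ≠ h' p.1}).toReal := by
      rw [hR, hR]
      have sub : {p : Z × Bool | h p.1 ≠ p.2} ⊆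
          {p : Z × Bool | h' p.1 ≠ p.2} ∪ {p : Z × Bool | h p.1 ≠ h' p.1} := by
        intro p hp
        simp only [Set.mem_setOf_eq, Set.mem_union] at *
        by_cases hc : h' p.1 = p.2
        · exact Or.inr (by rw [hc]; exact hp)
        · exact Or.inl hc
      calc (μt {p : Z × Bool | h p.1 ≠ p.2}).toReal
          ≤ (μt {p : Z × Bool | h' p.1 ≠ p.2} + μt {p : Z × Bool | h p.1 ≠ h' p.1}).toReal := by
            apply ENNReal.toReal_mono
            · exact ENNReal.add_ne_top.mpr ⟨measure_ne_top _ _, measure_ne_top _ _⟩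
            · exact le_trans (measure_mono sub) (measure_union_le _ _)
        _ = (μt {p : Z × Bool | h' p.1 ≠ p.2}).toReal + (μt {p : Z × Bool | h p.1 ≠ h' p.1}).toReal :=
            ENNReal.toReal_add (measure_ne_top _ _) (measure_ne_top _ _)
    -- (B)
    have B : (μt {p : Z × Bool | h p.1 ≠ h' p.1}).toReal ≤
        (μs {p : Z × Bool | h p.1 ≠ h' p.1}).toReal + (1/2) * dHH := by
      have hle := le_ciSup hSbdd (⟨⟨h, hh⟩, ⟨h', hh'⟩⟩ : H × H)
      rw [← hmap μs h h' mh mh', ← hmap μt h h' mh mh']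
      have habs : |((μs.map Prod.fst) {z | h z ≠ h' z}).toReal -
          ((μt.map Prod.fst) {z | h z ≠ h' z}).toReal| ≤
          ⨆ p : H × H, |((μs.map Prod.fst) {z | p.1.1 z ≠ p.2.1 z}).toReal -
            ((μt.map Prod.fst) {z | p.1.1 z ≠ p.2.1 z}).toReal| := hle
      rw [hd]
      rw [abs_sub_le_iff] at habs
      linarith [habs.2]
    -- (C)
    have C : (μs {p : Z × Bool | h p.1 ≠ h' p.1}).toReal ≤ R μs h + R μs h' := by
      rw [hR, hR]
      have sub : {p : Z × Bool | h p.1 ≠ h' p.1} ⊆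
          {p : Z × Bool | h p.1 ≠ p.2} ∪ {p : Z × Bool | h' p.1 ≠ p.2} := by
        intro p hp
        simp only [Set.mem_setOf_eq, Set.mem_union] at *
        by_cases hc : h p.1 = p.2
        · exact Or.inr (by rw [← hc]; exact fun e => hp e.symm)
        · exact Or.inl hc
      calc (μs {p : Z × Bool | h p.1 ≠ h' p.1}).toReal
          ≤ (μs {p : Z × Bool | h p.1 ≠ p.2} + μs {p : Z × Bool | h' p.1 ≠ p.2}).toReal := by
            apply ENNReal.toReal_mono
            · exact ENNReal.add_ne_top.mpr ⟨measure_ne_top _ _, measure_ne_top _ _⟩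
            · exact le_trans (measure_mono sub) (measure_union_le _ _)
        _ = (μs {p : Z × Bool | h p.1 ≠ p.2}).toReal + (μs {p : Z × Bool | h' p.1 ≠ p.2}).toReal :=
            ENNReal.toReal_add (measure_ne_top _ _) (measure_ne_top _ _)
    linarith
  -- conclude via infimum
  have hbdd : BddBelow (Set.range fun h' : H => R μt h' + R μs h') := by
    refine ⟨0, ?_⟩
    rintro x ⟨h', rfl⟩
    have := hR μt h'
    have := hR μs h'
    simp only [hR]
    positivity
  have hinf : R μt h - R μs h - (1/2) * dHH ≤ ⨅ h' : H, (R μt h' + R μs h') := by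
    haveI : Nonempty H := hne.to_subtype
    apply le_ciInf
    intro h'
    have := key h' h'.2
    linarith
  rw [hlam]
  linarith
end

section
/- Let Z be a measurable space, let μ_s and μ_t be probability measures on Z × Bool with feature-marginals P_s := μ_s.map Prod.fst and P_t := μ_t.map Prod.fst, and let H be a set of measurable hypotheses h : Z → Bool. Then for every h ∈ H and every h' ∈ H, R_{μ_t}(h) ≤ R_{μ_s}(h) + (1/2) · d_{HΔH}(P_s, P_t) + R_{μ_t}(h') + R_{μ_s}(h'). -/
open MeasureTheory

/-- For every pair of hypotheses `h, h'` in the class `H`, the target risk of `h` is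
bounded by its source risk plus half the HΔH-divergence of the feature marginals plus
the sum of the target and source risks of `h'`. -/
theorem adaptation_bound_pairwise {Z : Type*} [MeasurableSpace Z]
    (μs μt : Measure (Z × Bool)) [IsProbabilityMeasure μs] [IsProbabilityMeasure μt]
    (H : Set (Z → Bool)) (hmeas : ∀ h ∈ H, Measurable h)
    (Ps Pt : Measure Z) (hPs : Ps = μs.map Prod.fst) (hPt : Pt = μt.map Prod.fst)
    (R : Measure (Z × Bool) → (Z → Bool) → ℝ)
    (hR : ∀ μ h, R μ h = (μ {p : Z × Bool | h p.1 ≠ p.2}).toReal)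
    (dHH : ℝ)
    (hd : dHH = 2 * ⨆ p : H × H,
      |(Ps {z | p.1.1 z ≠ p.2.1 z}).toReal - (Pt {z | p.1.1 z ≠ p.2.1 z}).toReal|) :
    ∀ h ∈ H, ∀ h' ∈ H,
      R μt h ≤ R μs h + (1 / 2) * dHH + R μt h' + R μs h' := by
  intro h hH h' hH'
  have mh := hmeas h hH
  have mh' := hmeas h' hH'
  have hPsP : IsProbabilityMeasure Ps := hPs ▸ Measure.isProbabilityMeasure_map measurable_fst.aemeasurable
  have hPtP : IsProbabilityMeasure Pt := hPt ▸ Measure.isProbabilityMeasure_map measurable_fst.aemeasurable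
  have mset : MeasurableSet {x : Bool × Bool | x.1 ≠ x.2} := (Set.toFinite _).measurableSet
  have mD : MeasurableSet {z | h z ≠ h' z} := by
    have he : {z | h z ≠ h' z} = (fun z => (h z, h' z)) ⁻¹' {x : Bool × Bool | x.1 ≠ x.2} := rfl
    rw [he]; exact mset.preimage (mh.prodMk mh')
  have hPtD : Pt {z | h z ≠ h' z} = μt {p : Z × Bool | h p.1 ≠ h' p.1} := by
    rw [hPt, Measure.map_apply measurable_fst mD]; rfl
  have hPsD : Ps {z | h z ≠ h' z} = μs {p : Z × Bool | h p.1 ≠ h' p.1} := by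
    rw [hPs, Measure.map_apply measurable_fst mD]; rfl
  -- triangle inequality for target risk
  have sub1 : {p : Z × Bool | h p.1 ≠ p.2} ⊆
      {p : Z × Bool | h' p.1 ≠ p.2} ∪ {p : Z × Bool | h p.1 ≠ h' p.1} := by
    intro p hp
    by_cases hc : h' p.1 = p.2
    · right; simp only [Set.mem_setOf_eq]; rw [hc]; exact hp
    · left; exact hc
  have t1 : (μt {p : Z × Bool | h p.1 ≠ p.2}).toReal ≤
      (μt {p : Z × Bool | h' p.1 ≠ p.2}).toReal + (μt {p : Z × Bool | h p.1 ≠ h' p.1}).toReal := by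
    rw [← ENNReal.toReal_add (measure_ne_top _ _) (measure_ne_top _ _)]
    exact ENNReal.toReal_mono
      (ENNReal.add_ne_top.mpr ⟨measure_ne_top _ _, measure_ne_top _ _⟩)
      ((measure_mono sub1).trans (measure_union_le _ _))
  -- disagreement bounded by source risks
  have sub2 : {p : Z × Bool | h p.1 ≠ h' p.1} ⊆
      {p : Z × Bool | h p.1 ≠ p.2} ∪ {p : Z × Bool | h' p.1 ≠ p.2} := by
    intro p hp
    by_cases hc : h p.1 = p.2
    · right; simp only [Set.mem_setOf_eq]; rw [← hc]; exact fun e => hp e.symm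
    · left; exact hc
  have t2 : (μs {p : Z × Bool | h p.1 ≠ h' p.1}).toReal ≤
      (μs {p : Z × Bool | h p.1 ≠ p.2}).toReal + (μs {p : Z × Bool | h' p.1 ≠ p.2}).toReal := by
    rw [← ENNReal.toReal_add (measure_ne_top _ _) (measure_ne_top _ _)]
    exact ENNReal.toReal_mono
      (ENNReal.add_ne_top.mpr ⟨measure_ne_top _ _, measure_ne_top _ _⟩)
      ((measure_mono sub2).trans (measure_union_le _ _))
  -- the sup step
  have bdd : BddAbove (Set.range fun p : H × H =>
      |(Ps {z | p.1.1 z ≠ p.2.1 z}).toReal - (Pt {z | p.1.1 z ≠ p.2.1 z}).toReal|) := by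
    refine ⟨1, ?_⟩
    rintro x ⟨p, rfl⟩
    have h1 : (Ps {z | p.1.1 z ≠ p.2.1 z}).toReal ≤ 1 := by
      have := prob_le_one (μ := Ps) (s := {z | p.1.1 z ≠ p.2.1 z})
      simpa using ENNReal.toReal_mono ENNReal.one_ne_top this
    have h2 : (Pt {z | p.1.1 z ≠ p.2.1 z}).toReal ≤ 1 := by
      have := prob_le_one (μ := Pt) (s := {z | p.1.1 z ≠ p.2.1 z})
      simpa using ENNReal.toReal_mono ENNReal.one_ne_top this
    have h3 : (0:ℝ) ≤ (Ps {z | p.1.1 z ≠ p.2.1 z}).toReal := ENNReal.toReal_nonneg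
    have h4 : (0:ℝ) ≤ (Pt {z | p.1.1 z ≠ p.2.1 z}).toReal := ENNReal.toReal_nonneg
    rw [abs_sub_le_iff]
    constructor <;> linarith
  have hle : |(Ps {z | h z ≠ h' z}).toReal - (Pt {z | h z ≠ h' z}).toReal| ≤
      ⨆ p : H × H, |(Ps {z | p.1.1 z ≠ p.2.1 z}).toReal - (Pt {z | p.1.1 z ≠ p.2.1 z}).toReal| :=
    le_ciSup bdd (⟨⟨h, hH⟩, ⟨h', hH'⟩⟩ : H × H)
  have t3 : (Pt {z | h z ≠ h' z}).toReal ≤ (Ps {z | h z ≠ h' z}).toReal + (1 / 2) * dHH := by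
    have habs : (Pt {z | h z ≠ h' z}).toReal - (Ps {z | h z ≠ h' z}).toReal ≤
        |(Ps {z | h z ≠ h' z}).toReal - (Pt {z | h z ≠ h' z}).toReal| := by
      rw [abs_sub_comm]; exact le_abs_self _
    rw [hd]; linarith
  rw [hR, hR, hR, hR]
  rw [hPtD] at t3
  rw [hPsD] at t3
  linarith
end
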